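/- Let φ, φ' : 𝒪_n → 𝒪_n be ℂ-algebra homomorphisms such that φ(𝔪) ⊆ 𝔪 and φ'(𝔪) ⊆ 𝔪. If φ(z_a) = φ'(z_a) for all a = 1, …, n, then φ = φ'. (Such homomorphisms are continuous for the 𝔪-adic topology and hence determined by the images of the coordinate germs.) -/

import Mathlib

open Filter Topology Set

noncomputable section

/-- `ℂⁿ`. -/
abbrev Cn (n : ℕ) : Type := EuclideanSpace ℂ (Fin n)

namespace Filter.Germ

/-- The value at `x` of a germ at the neighbourhood filter of `x`. -/
def valueAt {α β : Type*} [TopologicalSpace α] {x : α} (g : Germ (𝓝 x) β) : β :=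
  g.liftOn (fun f => f x) fun _ _ h => h.eq_of_nhds

@[simp] lemma valueAt_coe {α β : Type*} [TopologicalSpace α] {x : α} (f : α → β) :
    (↑f : Germ (𝓝 x) β).valueAt = f x := rfl

end Filter.Germ

/-- The `ℂ`-algebra structure on germs of `ℂ`-valued functions,
given by the constant functions. -/
instance germAlgebra {α : Type*} (l : Filter α) : Algebra ℂ (Germ l ℂ) :=
  ((Filter.Germ.coeRingHom l).comp (Pi.constRingHom α ℂ)).toAlgebra

/-- `𝒪ₙ`: the ring of germs at the origin of `ℂⁿ` of holomorphic functions, realized as the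
subalgebra of the ring of germs at `𝓝 0` of `ℂ`-valued functions consisting of germs having a
representative that is complex-analytic on a neighbourhood of `0`. -/
def HoloGerm (n : ℕ) : Subalgebra ℂ (Germ (𝓝 (0 : Cn n)) ℂ) where
  carrier := {g | ∃ F : Cn n → ℂ, AnalyticAt ℂ F 0 ∧ (↑F : Germ (𝓝 (0 : Cn n)) ℂ) = g}
  mul_mem' := by
    rintro a b ⟨F, hF, rfl⟩ ⟨G, hG, rfl⟩
    exact ⟨F * G, hF.mul hG, by rw [← Filter.Germ.coe_mul]⟩
  add_mem' := by
    rintro a b ⟨F, hF, rfl⟩ ⟨G, hG, rfl⟩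
    exact ⟨F + G, hF.add hG, by rw [← Filter.Germ.coe_add]⟩
  algebraMap_mem' := fun c => ⟨fun _ => c, analyticAt_const, rfl⟩

lemma valueAt_add {n : ℕ} (a b : Germ (𝓝 (0 : Cn n)) ℂ) :
    (a + b).valueAt = a.valueAt + b.valueAt := by
  induction a using Filter.Germ.inductionOn with
  | h f => induction b using Filter.Germ.inductionOn with
    | h g => rfl

lemma valueAt_mul {n : ℕ} (a b : Germ (𝓝 (0 : Cn n)) ℂ) :
    (a * b).valueAt = a.valueAt * b.valueAt := by
  induction a using Filter.Germ.inductionOn with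
  | h f => induction b using Filter.Germ.inductionOn with
    | h g => rfl

set_option synthInstance.maxHeartbeats 1000000 in
/-- The maximal ideal `𝔪 ⊆ 𝒪ₙ` of germs vanishing at the origin. -/
def mIdeal (n : ℕ) : Ideal (HoloGerm n) where
  carrier := {g | (g : Germ (𝓝 (0 : Cn n)) ℂ).valueAt = 0}
  add_mem' := by
    intro a b ha hb
    show ((a + b : HoloGerm n) : Germ (𝓝 (0 : Cn n)) ℂ).valueAt = 0
    rw [Subalgebra.coe_add, valueAt_add, ha, hb, add_zero]
  zero_mem' := by
    show ((0 : HoloGerm n) : Germ (𝓝 (0 : Cn n)) ℂ).valueAt = 0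
    rw [Subalgebra.coe_zero]
    rfl
  smul_mem' := by
    intro c x hx
    have hx' : ((x : Germ (𝓝 (0 : Cn n)) ℂ)).valueAt = 0 := hx
    show (((c * x : HoloGerm n) : Germ (𝓝 (0 : Cn n)) ℂ)).valueAt = 0
    rw [Subalgebra.coe_mul, valueAt_mul, hx', mul_zero]

/-- The germ `zₐ ∈ 𝒪ₙ` of the `a`-th coordinate function. -/
def coordGerm (n : ℕ) (a : Fin n) : HoloGerm n :=
  ⟨(↑(fun z : Cn n => z a) : Germ (𝓝 (0 : Cn n)) ℂ),
    ⟨fun z : Cn n => z a, (EuclideanSpace.proj (𝕜 := ℂ) a).analyticAt 0, rfl⟩⟩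

/-!
A holomorphic germ vanishing at the origin is `∑ₐ zₐ gₐ` with `gₐ` holomorphic (Hadamard's lemma,
obtained by shifting the power series), so modulo `𝔪ᵏ` every germ is a polynomial in the
coordinates. Since `φ` and `φ'` preserve `𝔪ᵏ` and agree on polynomials, `φ g - φ' g ∈ 𝔪ᵏ` for every
`k`. Finally `⋂ₖ 𝔪ᵏ = 0`: elements of `𝔪ᵏ` are `O(‖z‖ᵏ)`, and an analytic function that is
`O(‖z‖ᵏ)` for every `k` has vanishing Taylor series.
-/

open Asymptotics

section Analytic

variable {𝕜 E F : Type*} [NontriviallyNormedField 𝕜] [NormedAddCommGroup E] [NormedSpace 𝕜 E]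
  [NormedAddCommGroup F] [NormedSpace 𝕜 F] {f : E → F} {p : FormalMultilinearSeries 𝕜 E F} {x : E}

theorem HasFPowerSeriesAt.apply_eq_zero_of_isBigO_pow (hf : HasFPowerSeriesAt f p x)
    (hflat : ∀ k : ℕ, (fun y => f (x + y)) =O[𝓝 0] fun y => ‖y‖ ^ k) (n : ℕ) (y : E) :
    (p n fun _ => y) = 0 := by
  induction n using Nat.strong_induction_on generalizing y with
  | _ k hk =>
  have psum_eq : p.partialSum (k + 1) = fun y => p k fun _ => y := by
    funext z
    refine Finset.sum_eq_single _ (fun b hb hnb => ?_) fun hn => ?_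
    · simp only [hk b ((Finset.mem_range_succ_iff.mp hb).lt_of_ne hnb)]
    · exact absurd (Finset.mem_range.mpr (lt_add_one k)) hn
  have h := (hflat (k + 1)).sub (hf.isBigO_sub_partialSum_pow (k + 1))
  simp only [sub_sub_cancel, psum_eq] at h
  exact h.continuousMultilinearMap_apply_eq_zero y

theorem AnalyticAt.eventually_eq_zero_of_isBigO_pow (hf : AnalyticAt 𝕜 f x)
    (hflat : ∀ k : ℕ, (fun y => f (x + y)) =O[𝓝 0] fun y => ‖y‖ ^ k) : f =ᶠ[𝓝 x] 0 := by
  obtain ⟨p, hp⟩ := hf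
  filter_upwards [hp.eventually_hasSum_sub] with y hy
  have hzero : (fun n => p n fun _ => y - x) = 0 := by
    funext n
    exact hp.apply_eq_zero_of_isBigO_pow hflat n (y - x)
  rw [hzero] at hy
  exact hy.unique hasSum_zero

theorem AnalyticAt.exists_eventually_eq_add_apply_sub [CompleteSpace F] (hf : AnalyticAt 𝕜 f x) :
    ∃ g : E → E →L[𝕜] F, AnalyticAt 𝕜 g x ∧ ∀ᶠ y in 𝓝 x, f y = f x + g y (y - x) := by
  obtain ⟨p, r, hp⟩ := hf
  -- unshifting `p.shift` recovers `p`, so `f` and `y ↦ f x + g y (y - x)` share the series `p`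
  have hg : HasFPowerSeriesOnBall (fun y => p.shift.sum (y - x)) p.shift x p.radius := by
    simpa using (p.shift.hasFPowerSeriesOnBall (by simpa using hp.radius_pos)).comp_sub x
  have hunshift : p.shift.unshift (f x) = p := by
    ext (_ | n) v
    · simp [FormalMultilinearSeries.unshift, ← hp.coeff_zero v]
    · simp [FormalMultilinearSeries.unshift, FormalMultilinearSeries.shift]
  have h := hp.hasFPowerSeriesAt.sub (hunshift ▸ hg.unshift (z := f x)).hasFPowerSeriesAt
  refine ⟨_, hg.analyticAt, ?_⟩
  filter_upwards [(sub_self p ▸ h).eventually_eq_zero] with y hy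
  exact sub_eq_zero.mp hy

end Analytic

theorem exists_mem_adjoin_sub_mem_span_range_pow {R A ι : Type*} [CommSemiring R] [CommRing A]
    [Algebra R A] [Fintype ι] (x : ι → A)
    (hconst : ∀ a : A, ∃ r : R, a - algebraMap R A r ∈ Ideal.span (range x)) (k : ℕ) (a : A) :
    ∃ P ∈ Algebra.adjoin R (range x), a - P ∈ Ideal.span (range x) ^ k := by
  induction k generalizing a with
  | zero => exact ⟨0, zero_mem _, by simp⟩
  | succ k ih =>
    obtain ⟨r, hr⟩ := hconst a
    obtain ⟨c, hc⟩ := Ideal.mem_span_range_iff_exists_fun.mp hr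
    choose P hP hcP using fun i => ih (c i)
    refine ⟨algebraMap R A r + ∑ i, P i * x i, ?_, ?_⟩
    · exact add_mem (Subalgebra.algebraMap_mem _ r) <| sum_mem fun i _ =>
        mul_mem (hP i) (Algebra.subset_adjoin (mem_range_self i))
    · have hdiff : a - (algebraMap R A r + ∑ i, P i * x i) = ∑ i, (c i - P i) * x i := by
        simp only [sub_mul, Finset.sum_sub_distrib, hc]
        ring
      rw [hdiff, pow_succ]
      exact Ideal.sum_mem _ fun i _ =>
        Ideal.mul_mem_mul (hcP i) (Ideal.subset_span (mem_range_self i))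

namespace Filter.Germ

lemma valueAt_sub {α β : Type*} [TopologicalSpace α] [Sub β] {x : α} (a b : Germ (𝓝 x) β) :
    (a - b).valueAt = a.valueAt - b.valueAt :=
  inductionOn₂ a b fun _ _ => rfl

end Filter.Germ

namespace HoloGerm

variable {n : ℕ}

lemma mem_mIdeal_iff {g : HoloGerm n} : g ∈ mIdeal n ↔ (g : Germ (𝓝 (0 : Cn n)) ℂ).valueAt = 0 :=
  Iff.rfl

lemma sub_algebraMap_valueAt_mem_mIdeal (g : HoloGerm n) :
    g - algebraMap ℂ (HoloGerm n) (g : Germ (𝓝 (0 : Cn n)) ℂ).valueAt ∈ mIdeal n := by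
  rw [mem_mIdeal_iff, Subalgebra.coe_sub, Filter.Germ.valueAt_sub, Subalgebra.coe_algebraMap]
  exact sub_self _

lemma coordGerm_mem_mIdeal (a : Fin n) : coordGerm n a ∈ mIdeal n :=
  rfl

lemma mIdeal_le_span_coordGerm : mIdeal n ≤ Ideal.span (range (coordGerm n)) := by
  rintro ⟨_, F, hF, rfl⟩ hF0
  replace hF0 : F 0 = 0 := hF0
  obtain ⟨G, hG, hFG⟩ := hF.exists_eventually_eq_add_apply_sub
  rw [Ideal.mem_span_range_iff_exists_fun]
  refine ⟨fun a => ⟨↑(fun z => G z (EuclideanSpace.single a 1)), _,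
    (ContinuousLinearMap.apply ℂ ℂ _).analyticAt _ |>.comp hG, rfl⟩, ?_⟩
  apply Subtype.ext
  simp only [← Subalgebra.val_apply, map_sum, map_mul]
  change ∑ a, Germ.coeRingHom _ (fun z => G z (EuclideanSpace.single a 1)) *
    Germ.coeRingHom _ (fun z : Cn n => z a) = Germ.coeRingHom _ F
  simp only [← map_mul, ← map_sum]
  refine Germ.coe_eq.mpr ?_
  filter_upwards [hFG] with z hz
  have hexpand (v : Cn n) : G z v = ∑ a, v a * G z (EuclideanSpace.single a 1) := by
    conv_lhs => rw [← (EuclideanSpace.basisFun (Fin n) ℂ).toBasis.sum_repr v]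
    simp
  simp only [Finset.sum_apply, Pi.mul_apply, hz, hF0, zero_add, sub_zero, hexpand z, mul_comm]

lemma mIdeal_eq_span_coordGerm : mIdeal n = Ideal.span (range (coordGerm n)) :=
  le_antisymm mIdeal_le_span_coordGerm
    (Ideal.span_le.mpr (range_subset_iff.mpr coordGerm_mem_mIdeal))

lemma exists_mem_adjoin_sub_mem_mIdeal_pow (k : ℕ) (g : HoloGerm n) :
    ∃ P ∈ Algebra.adjoin ℂ (range (coordGerm n)), g - P ∈ mIdeal n ^ k := by
  rw [mIdeal_eq_span_coordGerm]
  exact exists_mem_adjoin_sub_mem_span_range_pow (coordGerm n)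
    (fun g => ⟨_, mIdeal_eq_span_coordGerm ▸ sub_algebraMap_valueAt_mem_mIdeal g⟩) k g

variable (n) in
def vanishingToOrder (k : ℕ) : Ideal (HoloGerm n) where
  carrier := {g | ∃ F : Cn n → ℂ, (↑F : Germ (𝓝 (0 : Cn n)) ℂ) = g ∧ F =O[𝓝 0] fun z => ‖z‖ ^ k}
  add_mem' := by
    rintro _ _ ⟨F, hF, hFO⟩ ⟨G, hG, hGO⟩
    exact ⟨F + G, by rw [Germ.coe_add, hF, hG]; rfl, hFO.add hGO⟩
  zero_mem' := ⟨0, rfl, isBigO_zero _ _⟩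
  smul_mem' := by
    rintro ⟨_, C, hC, rfl⟩ _ ⟨F, hF, hFO⟩
    refine ⟨C * F, by rw [Germ.coe_mul, hF]; rfl, ?_⟩
    simpa [Pi.mul_def] using (hC.continuousAt.tendsto.isBigO_one ℝ).mul hFO

lemma vanishingToOrder_zero : vanishingToOrder n 0 = ⊤ :=
  eq_top_iff.mpr fun ⟨_, F, hF, hFg⟩ _ =>
    ⟨F, hFg, by simpa using hF.continuousAt.tendsto.isBigO_one ℝ⟩

lemma vanishingToOrder_mul_le (j k : ℕ) :
    vanishingToOrder n j * vanishingToOrder n k ≤ vanishingToOrder n (j + k) :=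
  Ideal.mul_le.mpr fun _ ⟨F, hF, hFO⟩ _ ⟨G, hG, hGO⟩ =>
    ⟨F * G, by rw [Germ.coe_mul, hF, hG]; rfl, by simpa [Pi.mul_def, pow_add] using hFO.mul hGO⟩

lemma mIdeal_le_vanishingToOrder_one : mIdeal n ≤ vanishingToOrder n 1 := by
  rintro ⟨_, F, hF, rfl⟩ hF0
  replace hF0 : F 0 = 0 := hF0
  refine ⟨F, rfl, ?_⟩
  simpa [hF0] using hF.differentiableAt.isBigO_sub.norm_right

lemma mIdeal_pow_le_vanishingToOrder (k : ℕ) : mIdeal n ^ k ≤ vanishingToOrder n k := by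
  induction k with
  | zero => simp [vanishingToOrder_zero]
  | succ k ih =>
    rw [pow_succ]
    exact (Ideal.mul_mono ih mIdeal_le_vanishingToOrder_one).trans (vanishingToOrder_mul_le k 1)

lemma eq_zero_of_forall_mem_vanishingToOrder {g : HoloGerm n}
    (hg : ∀ k, g ∈ vanishingToOrder n k) : g = 0 := by
  obtain ⟨_, F, hF, rfl⟩ := g
  have hflat (k : ℕ) : F =O[𝓝 0] fun z => ‖z‖ ^ k := by
    obtain ⟨Fk, hFk, hFkO⟩ := hg k
    exact hFkO.congr' (Germ.coe_eq.mp hFk) EventuallyEq.rfl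
  exact Subtype.ext (Germ.coe_eq.mpr (hF.eventually_eq_zero_of_isBigO_pow (by simpa using hflat)))

variable (n) in
theorem iInf_mIdeal_pow_eq_bot : ⨅ k, mIdeal n ^ k = ⊥ :=
  eq_bot_iff.mpr fun _ hg => eq_zero_of_forall_mem_vanishingToOrder fun k =>
    mIdeal_pow_le_vanishingToOrder k (Submodule.mem_iInf _ |>.mp hg k)

end HoloGerm

theorem algHom_eq_of_eq_on_coords_general (n : ℕ)
    (φ φ' : HoloGerm n →ₐ[ℂ] HoloGerm n)
    (hφ : ∀ g ∈ mIdeal n, φ g ∈ mIdeal n)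
    (hφ' : ∀ g ∈ mIdeal n, φ' g ∈ mIdeal n)
    (h : ∀ a : Fin n, φ (coordGerm n a) = φ' (coordGerm n a)) :
    φ = φ' := by
  have hadjoin : EqOn φ φ' (Algebra.adjoin ℂ (range (coordGerm n))) :=
    AlgHom.eqOn_adjoin_iff.mpr (forall_mem_range.mpr h)
  refine AlgHom.ext fun g => ?_
  rw [← sub_eq_zero, ← Ideal.mem_bot, ← HoloGerm.iInf_mIdeal_pow_eq_bot n, Submodule.mem_iInf]
  intro k
  obtain ⟨P, hP, hgP⟩ := HoloGerm.exists_mem_adjoin_sub_mem_mIdeal_pow k g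
  have hmap (ψ : HoloGerm n →ₐ[ℂ] HoloGerm n) (hψ : ∀ g ∈ mIdeal n, ψ g ∈ mIdeal n) :
      ψ (g - P) ∈ mIdeal n ^ k :=
    Ideal.le_comap_pow ψ k (Ideal.pow_right_mono hψ k hgP)
  rw [← sub_sub_sub_cancel_right _ _ (φ P), ← map_sub, hadjoin hP, ← map_sub]
  exact sub_mem (hmap φ hφ) (hmap φ' hφ')

/-- Let `φ, φ' : 𝒪ₙ → 𝒪ₙ` be `ℂ`-algebra homomorphisms with `φ(𝔪) ⊆ 𝔪` and `φ'(𝔪) ⊆ 𝔪`.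
If `φ(zₐ) = φ'(zₐ)` for all coordinates `a`, then `φ = φ'`. -/
theorem algHom_eq_of_eq_on_coords (n : ℕ) (hn : 1 ≤ n)
    (φ φ' : HoloGerm n →ₐ[ℂ] HoloGerm n)
    (hφ : ∀ g ∈ mIdeal n, φ g ∈ mIdeal n)
    (hφ' : ∀ g ∈ mIdeal n, φ' g ∈ mIdeal n)
    (h : ∀ a : Fin n, φ (coordGerm n a) = φ' (coordGerm n a)) :
    φ = φ' :=
  algHom_eq_of_eq_on_coords_general n φ φ' hφ hφ' h
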